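/- Comparison theorem for perturbed forward integral equations. Let g be a Carathéodory driver with Lipschitz constant C, let f : ℝ → ℝ be bounded and measurable, and let A : ℝ → ℝ be nondecreasing on [0, T] with A 0 = 0. Let x, y ∈ ℝ with x ≥ y. Let V be a solution of the forward integral equation with data (x, g, f), and let Y : ℝ → ℝ be bounded and measurable with Y t = y − (∫ s in [0, t], g s (Y s) ds) + f t − A t for every t ∈ [0, T]. Then Y t ≤ V t for every t ∈ [0, T]. -/

import Mathlib

open MeasureTheory Set

/-- A bounded measurable real function. -/
def BddMeas (f : ℝ → ℝ) : Prop :=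
  Measurable f ∧ ∃ M : ℝ, ∀ t : ℝ, |f t| ≤ M

/-- A Carathéodory driver with Lipschitz constant `C` on `[0, T]`. -/
def CaratheodoryDriver (T C : ℝ) (g : ℝ → ℝ → ℝ) : Prop :=
  Measurable (Function.uncurry g) ∧
  IntegrableOn (fun s => g s 0) (Icc 0 T) ∧
  ∀ s ∈ Icc (0 : ℝ) T, ∀ y₁ y₂ : ℝ, |g s y₁ - g s y₂| ≤ C * |y₁ - y₂|

/-- A solution of the forward integral equation with data `(x, g, f)`:
a bounded measurable `V` with `V t = x - ∫_{[0,t]} g s (V s) ds + f t` on `[0, T]`. -/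
def IsFwdSolution (T : ℝ) (g : ℝ → ℝ → ℝ) (x : ℝ) (f V : ℝ → ℝ) : Prop :=
  BddMeas V ∧
  ∀ t ∈ Icc (0 : ℝ) T, V t = x - (∫ s in Icc (0 : ℝ) t, g s (V s)) + f t

/-!
The difference `D = Y - V` satisfies `D t = (y - x) - ∫₀ᵗ (g s (Y s) - g s (V s)) ds - A t`.
The nondecreasing `A` only pushes `D` down, and the integral term is continuous, so a last
time `τ ≤ t` with `D τ ≤ 0` exists. On `(τ, t]` the Lipschitz bound gives
`-(g s (Y s) - g s (V s)) ≤ C D s`, whence `D⁺ t ≤ C ∫₀ᵗ D⁺`, and the integral form of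
Grönwall's lemma (iterated into `D⁺ t ≤ M (C t)ⁿ / n!`) forces `D⁺ = 0`.
-/

theorem BddMeas.integrableOn {f : ℝ → ℝ} (hf : BddMeas f) {s : Set ℝ} (hs : volume s ≠ ⊤) :
    IntegrableOn f s := by
  obtain ⟨hm, M, hM⟩ := hf
  exact Measure.integrableOn_of_bounded hs hm.aestronglyMeasurable (ae_of_all _ hM)

theorem CaratheodoryDriver.integrableOn_comp {T C : ℝ} {g : ℝ → ℝ → ℝ}
    (hg : CaratheodoryDriver T C g) {W : ℝ → ℝ} (hWm : Measurable W)
    (hW : IntegrableOn W (Icc 0 T)) : IntegrableOn (fun s => g s (W s)) (Icc 0 T) := by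
  obtain ⟨hgm, hg0, hlip⟩ := hg
  refine Integrable.mono' (hg0.abs.add (hW.abs.const_mul C))
    (hgm.comp (measurable_id.prodMk hWm)).aestronglyMeasurable.restrict ?_
  refine (ae_restrict_iff' measurableSet_Icc).2 (ae_of_all _ fun s hs => ?_)
  calc ‖g s (W s)‖ ≤ |g s (W s) - g s 0| + |g s 0| := by
        simpa only [Real.norm_eq_abs, sub_add_cancel] using abs_add_le (g s (W s) - g s 0) (g s 0)
    _ ≤ C * |W s - 0| + |g s 0| := by gcongr; exact hlip s hs _ _
    _ = |g s 0| + C * |W s| := by rw [sub_zero, add_comm]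

theorem MeasureTheory.IntegrableOn.intervalIntegrable_of_le {f : ℝ → ℝ} {a b c d : ℝ}
    (hf : IntegrableOn f (Icc a b)) (hac : a ≤ c) (hcd : c ≤ d) (hdb : d ≤ b) :
    IntervalIntegrable f volume c d :=
  (intervalIntegrable_iff_integrableOn_Icc_of_le hcd).2 (hf.mono_set (Icc_subset_Icc hac hdb))

/-- A function `Z - A` with `Z` continuous and `A` nondecreasing can only jump down, so the last
time at which it is nonpositive is attained. -/
theorem exists_last_nonpos_of_eqOn_sub {Z A D : ℝ → ℝ} {a t : ℝ} (hat : a ≤ t)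
    (hZ : ContinuousOn Z (Icc a t)) (hA : MonotoneOn A (Icc a t))
    (hD : EqOn D (Z - A) (Icc a t)) (ha : D a ≤ 0) :
    ∃ τ ∈ Icc a t, D τ ≤ 0 ∧ ∀ s ∈ Ioc τ t, 0 < D s := by
  set S := {s ∈ Icc a t | D s ≤ 0}
  have hSne : S.Nonempty := ⟨a, ⟨left_mem_Icc.2 hat, ha⟩⟩
  have hSbdd : BddAbove S := ⟨t, fun s hs => hs.1.2⟩
  set τ := sSup S
  have hτ : τ ∈ Icc a t :=
    ⟨le_csSup hSbdd ⟨left_mem_Icc.2 hat, ha⟩, csSup_le hSne fun s hs => hs.1.2⟩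
  refine ⟨τ, hτ, ?_, fun s hs => ?_⟩
  · have hclosed : IsClosed (Icc a t ∩ (fun s => Z τ - Z s) ⁻¹' Ici (D τ)) :=
      (continuousOn_const.sub hZ).preimage_isClosed_of_isClosed isClosed_Icc isClosed_Ici
    have hsub : S ⊆ Icc a t ∩ (fun s => Z τ - Z s) ⁻¹' Ici (D τ) := fun s hs => by
      have hAs := hA hs.1 hτ (le_csSup hSbdd hs)
      have hDs := hs.2
      simp only [mem_inter_iff, mem_preimage, mem_Ici, hD hτ, hD hs.1, Pi.sub_apply] at hDs ⊢
      exact ⟨hs.1, by linarith⟩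
    exact ((closure_minimal hsub hclosed (csSup_mem_closure hSne hSbdd)).2 :).trans
      (sub_self _).le
  · by_contra! hs'
    exact (le_csSup hSbdd ⟨⟨hτ.1.trans hs.1.le, hs.2⟩, hs'⟩).not_gt hs.1

theorem posPart_le_mul_integral_posPart {T C c : ℝ} {h A D : ℝ → ℝ} (hC : 0 ≤ C)
    (hh : IntegrableOn h (Icc 0 T)) (hA : MonotoneOn A (Icc 0 T)) (hc : c ≤ A 0)
    (hD : ∀ t ∈ Icc 0 T, D t = c - (∫ s in 0..t, h s) - A t)
    (hhD : ∀ s ∈ Icc 0 T, |h s| ≤ C * |D s|)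
    (hDint : IntegrableOn (fun s => max (D s) 0) (Icc 0 T)) :
    ∀ t ∈ Icc 0 T, max (D t) 0 ≤ C * ∫ s in 0..t, max (D s) 0 := by
  intro t ht
  have hsub : Icc 0 t ⊆ Icc 0 T := Icc_subset_Icc le_rfl ht.2
  have hint_pos : 0 ≤ ∫ s in 0..t, max (D s) 0 :=
    intervalIntegral.integral_nonneg_of_forall ht.1 fun s => le_max_right _ _
  refine max_le ?_ (mul_nonneg hC hint_pos)
  obtain hDt | hDt := le_or_gt (D t) 0
  · exact hDt.trans (mul_nonneg hC hint_pos)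
  have hZ : ContinuousOn (fun s => c - ∫ u in 0..s, h u) (Icc 0 t) := by
    have := intervalIntegral.continuousOn_primitive_interval (μ := volume)
      (uIcc_of_le ht.1 ▸ hh.mono_set hsub)
    exact continuousOn_const.sub (uIcc_of_le ht.1 ▸ this)
  have hD0 : D 0 ≤ 0 := by
    rw [hD 0 (hsub (left_mem_Icc.2 ht.1)), intervalIntegral.integral_same]
    linarith
  obtain ⟨τ, hτ, hDτ, hpos⟩ :=
    exists_last_nonpos_of_eqOn_sub ht.1 hZ (hA.mono hsub) (fun s hs => hD s (hsub hs)) hD0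
  have hτT : τ ∈ Icc 0 T := hsub hτ
  calc D t ≤ D t - D τ := by linarith
    _ = -(∫ s in τ..t, h s) - (A t - A τ) := by
        rw [hD t ht, hD τ hτT, ← intervalIntegral.integral_interval_sub_left
          (hh.intervalIntegrable_of_le le_rfl ht.1 ht.2)
          (hh.intervalIntegrable_of_le le_rfl hτ.1 hτT.2)]
        ring
    _ ≤ ∫ s in τ..t, -h s := by
        rw [intervalIntegral.integral_neg]
        linarith [hA hτT ht hτ.2]
    _ ≤ ∫ s in τ..t, C * max (D s) 0 := by
        refine intervalIntegral.integral_mono_on_of_le_Ioo hτ.2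
          (hh.intervalIntegrable_of_le hτ.1 hτ.2 ht.2).neg
          ((hDint.intervalIntegrable_of_le hτ.1 hτ.2 ht.2).const_mul C) fun s hs => ?_
        have hDs := hpos s (Ioo_subset_Ioc_self hs)
        calc -h s ≤ |h s| := neg_le_abs _
          _ ≤ C * |D s| := hhD s ⟨hτ.1.trans hs.1.le, hs.2.le.trans ht.2⟩
          _ = C * max (D s) 0 := by rw [abs_of_pos hDs, max_eq_left hDs.le]
    _ ≤ ∫ s in 0..t, C * max (D s) 0 :=
        intervalIntegral.integral_mono_interval hτ.1 hτ.2 le_rfl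
          (ae_of_all _ fun s => mul_nonneg hC (le_max_right _ _))
          ((hDint.intervalIntegrable_of_le le_rfl ht.1 ht.2).const_mul C)
    _ = C * ∫ s in 0..t, max (D s) 0 := intervalIntegral.integral_const_mul _ _

theorem le_mul_pow_div_factorial_of_le_mul_integral {T C M : ℝ} {φ : ℝ → ℝ} (hC : 0 ≤ C)
    (hφ : IntegrableOn φ (Icc 0 T)) (hM : ∀ t ∈ Icc 0 T, φ t ≤ M)
    (hle : ∀ t ∈ Icc 0 T, φ t ≤ C * ∫ s in 0..t, φ s) (n : ℕ) :
    ∀ t ∈ Icc 0 T, φ t ≤ M * (C * t) ^ n / n.factorial := by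
  induction n with
  | zero => simpa using hM
  | succ n ih =>
    intro t ht
    have hmono : ∫ s in 0..t, φ s ≤ ∫ s in 0..t, M * C ^ n / n.factorial * s ^ n :=
      intervalIntegral.integral_mono_on ht.1 (hφ.intervalIntegrable_of_le le_rfl ht.1 ht.2)
        (by apply Continuous.intervalIntegrable; fun_prop) fun s hs => by
          simpa only [mul_pow, mul_div_right_comm, mul_assoc] using ih s ⟨hs.1, hs.2.trans ht.2⟩
    calc φ t ≤ C * ∫ s in 0..t, φ s := hle t ht
      _ ≤ C * ∫ s in 0..t, M * C ^ n / n.factorial * s ^ n := by gcongr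
      _ = M * (C * t) ^ (n + 1) / (n + 1).factorial := by
        rw [intervalIntegral.integral_const_mul, integral_pow, Nat.factorial_succ]
        push_cast
        field_simp
        ring

theorem eqOn_zero_of_le_mul_integral {T C : ℝ} {φ : ℝ → ℝ} (hC : 0 ≤ C)
    (hφ0 : ∀ t ∈ Icc 0 T, 0 ≤ φ t) (hφ : IntegrableOn φ (Icc 0 T))
    (hle : ∀ t ∈ Icc 0 T, φ t ≤ C * ∫ s in 0..t, φ s) :
    EqOn φ 0 (Icc 0 T) := by
  intro t ht
  have hM : ∀ s ∈ Icc 0 T, φ s ≤ C * ∫ u in 0..T, φ u := fun s hs =>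
    (hle s hs).trans <| mul_le_mul_of_nonneg_left (intervalIntegral.integral_mono_interval
      le_rfl hs.1 hs.2
      (ae_restrict_of_forall_mem measurableSet_Ioc fun u hu => hφ0 u (Ioc_subset_Icc_self hu))
      (hφ.intervalIntegrable_of_le le_rfl (hs.1.trans hs.2) le_rfl)) hC
  have hlim : Filter.Tendsto (fun n : ℕ => (C * ∫ u in 0..T, φ u) * (C * t) ^ n / n.factorial)
      Filter.atTop (nhds 0) := by
    simpa [mul_div_assoc] using (FloorSemiring.tendsto_pow_div_factorial_atTop (C * t)).const_mul
      (C * ∫ u in 0..T, φ u)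
  exact le_antisymm (ge_of_tendsto' hlim fun n =>
    le_mul_pow_div_factorial_of_le_mul_integral hC hφ hM hle n t ht) (hφ0 t ht)

theorem forward_eq_comparison_general
    (T C : ℝ) (hC : 0 ≤ C)
    (g : ℝ → ℝ → ℝ) (hg : CaratheodoryDriver T C g)
    (f : ℝ → ℝ)
    (A : ℝ → ℝ) (hA : MonotoneOn A (Icc 0 T)) (hA0 : A 0 = 0)
    (x y : ℝ) (hxy : y ≤ x)
    (V : ℝ → ℝ) (hV : IsFwdSolution T g x f V)
    (Y : ℝ → ℝ) (hY : BddMeas Y)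
    (hYeq : ∀ t ∈ Icc (0 : ℝ) T,
      Y t = y - (∫ s in Icc (0 : ℝ) t, g s (Y s)) + f t - A t) :
    ∀ t ∈ Icc (0 : ℝ) T, Y t ≤ V t := by
  obtain ⟨hV, hVeq⟩ := hV
  have hYi := hY.integrableOn (s := Icc 0 T) measure_Icc_lt_top.ne
  have hVi := hV.integrableOn (s := Icc 0 T) measure_Icc_lt_top.ne
  have hgY := hg.integrableOn_comp hY.1 hYi
  have hgV := hg.integrableOn_comp hV.1 hVi
  have hDeq : ∀ t ∈ Icc 0 T,
      Y t - V t = (y - x) - (∫ s in 0..t, g s (Y s) - g s (V s)) - A t := by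
    intro t ht
    rw [hYeq t ht, hVeq t ht,
      intervalIntegral.integral_sub (hgY.intervalIntegrable_of_le le_rfl ht.1 ht.2)
        (hgV.intervalIntegrable_of_le le_rfl ht.1 ht.2),
      intervalIntegral.integral_of_le ht.1, intervalIntegral.integral_of_le ht.1,
      ← integral_Icc_eq_integral_Ioc, ← integral_Icc_eq_integral_Ioc]
    ring
  have hkey := posPart_le_mul_integral_posPart (D := fun s => Y s - V s) hC (hgY.sub hgV) hA
    (by linarith) hDeq (fun s hs => hg.2.2 s hs _ _) (hYi.sub hVi).pos_part
  intro t ht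
  have hzero : max (Y t - V t) 0 = 0 :=
    eqOn_zero_of_le_mul_integral hC (fun _ _ => le_max_right _ _) (hYi.sub hVi).pos_part hkey ht
  linarith [le_max_left (Y t - V t) 0]

/-- Comparison theorem for perturbed forward integral equations. -/
theorem forward_eq_comparison
    (T C : ℝ) (hT : 0 < T) (hC : 0 ≤ C)
    (g : ℝ → ℝ → ℝ) (hg : CaratheodoryDriver T C g)
    (f : ℝ → ℝ) (hf : BddMeas f)
    (A : ℝ → ℝ) (hA : MonotoneOn A (Icc 0 T)) (hA0 : A 0 = 0)
    (x y : ℝ) (hxy : y ≤ x)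
    (V : ℝ → ℝ) (hV : IsFwdSolution T g x f V)
    (Y : ℝ → ℝ) (hY : BddMeas Y)
    (hYeq : ∀ t ∈ Icc (0 : ℝ) T,
      Y t = y - (∫ s in Icc (0 : ℝ) t, g s (Y s)) + f t - A t) :
    ∀ t ∈ Icc (0 : ℝ) T, Y t ≤ V t :=
  forward_eq_comparison_general T C hC g hg f A hA hA0 x y hxy V hV Y hY hYeq
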